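/- arXiv:math/9810202 — 4 statements merged into one kernel-verified Lean document; each statement's English description precedes it below -/
import Mathlib

section
/- The Lie algebra 𝔢(2) of the group of orientation-preserving Euclidean motions of the plane (spanned by t, e₁, e₂ with [t, e₁] = e₂, [t, e₂] = −e₁, [e₁, e₂] = 0) admits no ad-invariant symmetric bilinear form of Lorentzian signature. -/
/-!
Invariance reads `κ ⁅Z, X⁆ Y = -κ X ⁅Z, Y⁆`. As `e₁ = ⁅e₂, t⁆` and `e₂ = ⁅t, e₁⁆` are brackets
and `⁅e₁, e₂⁆ = 0`, choosing `X, Y, Z` among `t, e₁, e₂` shows that `κ` vanishes on every pair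
of basis vectors except `(t, t)`. Hence `κ X X = a² κ t t` for `X = a t + b e₁ + c e₂`: the form
is semidefinite and cannot take values of both signs.
-/

theorem not_neg_and_pos_of_forall_eq_sq_mul {α R : Type*} [CommRing R] [LinearOrder R]
    [IsStrictOrderedRing R] {q : α → R} {c : R} (hq : ∀ x, ∃ a, q x = a ^ 2 * c) (u v : α) :
    ¬ (q u < 0 ∧ 0 < q v) := by
  rintro ⟨hu, hv⟩
  obtain ⟨a, ha⟩ := hq u
  obtain ⟨b, hb⟩ := hq v
  rcases le_or_gt 0 c with hc | hc
  · exact hu.not_ge (ha ▸ mul_nonneg (sq_nonneg a) hc)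
  · exact hv.not_ge (hb ▸ mul_nonpos_of_nonneg_of_nonpos (sq_nonneg b) hc.le)

namespace EuclideanMotionAlgebra

variable {R 𝔤 : Type*} [CommRing R] [LieRing 𝔤] [LieAlgebra R 𝔤]
  {κ : 𝔤 →ₗ[R] 𝔤 →ₗ[R] R} {t e₁ e₂ : 𝔤}

theorem invariantForm_apply_translation_eq_zero
    (hinv : ∀ X Y Z : 𝔤, κ ⁅Z, X⁆ Y + κ X ⁅Z, Y⁆ = 0)
    (h1 : ⁅t, e₁⁆ = e₂) (h2 : ⁅t, e₂⁆ = -e₁) :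
    κ t e₁ = 0 ∧ κ t e₂ = 0 :=
  ⟨by simpa [h2] using hinv t e₂ t, by simpa [h1] using hinv t e₁ t⟩

theorem invariantForm_translation_eq_zero
    (hinv : ∀ X Y Z : 𝔤, κ ⁅Z, X⁆ Y + κ X ⁅Z, Y⁆ = 0)
    (hspan : Submodule.span R {t, e₁, e₂} = ⊤)
    (h1 : ⁅t, e₁⁆ = e₂) (h2 : ⁅t, e₂⁆ = -e₁) (h3 : ⁅e₁, e₂⁆ = 0) :
    κ e₁ = 0 ∧ κ e₂ = 0 := by
  have h1' : ⁅e₁, t⁆ = -e₂ := by rw [← lie_skew, h1]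
  have h2' : ⁅e₂, t⁆ = e₁ := by rw [← lie_skew, h2, neg_neg]
  have h3' : ⁅e₂, e₁⁆ = 0 := by rw [← lie_skew, h3, neg_zero]
  constructor <;> refine LinearMap.ext_on hspan ?_ <;>
    simp only [Set.EqOn, Set.mem_insert_iff, Set.mem_singleton_iff, forall_eq_or_imp, forall_eq,
      LinearMap.zero_apply]
  · refine ⟨?_, ?_, ?_⟩
    · simpa [h2] using hinv e₂ t t
    · simpa [h2', h3'] using hinv t e₁ e₂
    · simpa [h1'] using hinv e₁ t e₁
  · refine ⟨?_, ?_, ?_⟩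
    · simpa [h1] using hinv e₁ t t
    · simpa [h2'] using hinv e₂ t e₂
    · simpa [h1', h3] using hinv t e₂ e₁

theorem invariantForm_apply_self_eq_sq_mul
    (hinv : ∀ X Y Z : 𝔤, κ ⁅Z, X⁆ Y + κ X ⁅Z, Y⁆ = 0)
    (hspan : Submodule.span R {t, e₁, e₂} = ⊤)
    (h1 : ⁅t, e₁⁆ = e₂) (h2 : ⁅t, e₂⁆ = -e₁) (h3 : ⁅e₁, e₂⁆ = 0) (X : 𝔤) :
    ∃ a : R, κ X X = a ^ 2 * κ t t := by
  obtain ⟨ht₁, ht₂⟩ := invariantForm_apply_translation_eq_zero hinv h1 h2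
  obtain ⟨h₁, h₂⟩ := invariantForm_translation_eq_zero hinv hspan h1 h2 h3
  have hX : X ∈ Submodule.span R {t, e₁, e₂} := hspan ▸ Submodule.mem_top
  obtain ⟨a, y, hy, rfl⟩ := Submodule.mem_span_insert.mp hX
  obtain ⟨b, c, rfl⟩ := Submodule.mem_span_pair.mp hy
  refine ⟨a, ?_⟩
  simp only [map_add, map_smul, LinearMap.add_apply, LinearMap.smul_apply, smul_eq_mul,
    ht₁, ht₂, h₁, h₂, LinearMap.zero_apply]
  ring

end EuclideanMotionAlgebra

theorem euclidean_motions_algebra_has_no_invariant_lorentz_form_general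
    {𝔤 : Type*} [LieRing 𝔤] [LieAlgebra ℝ 𝔤]
    (t e₁ e₂ : 𝔤)
    (hspan : Submodule.span ℝ {t, e₁, e₂} = ⊤)
    (h1 : ⁅t, e₁⁆ = e₂) (h2 : ⁅t, e₂⁆ = -e₁) (h3 : ⁅e₁, e₂⁆ = 0) :
    ¬ ∃ κ : 𝔤 →ₗ[ℝ] 𝔤 →ₗ[ℝ] ℝ,
        (∀ X Y : 𝔤, κ X Y = κ Y X) ∧
        (∀ X Y Z : 𝔤, κ ⁅Z, X⁆ Y + κ X ⁅Z, Y⁆ = 0) ∧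
        (∃ u v w : 𝔤, Submodule.span ℝ {u, v, w} = ⊤ ∧
          κ u v = 0 ∧ κ u w = 0 ∧ κ v w = 0 ∧
          κ u u < 0 ∧ 0 < κ v v ∧ 0 < κ w w) := by
  rintro ⟨κ, -, hinv, u, v, -, -, -, -, -, huu, hvv, -⟩
  exact not_neg_and_pos_of_forall_eq_sq_mul (q := fun X => κ X X)
    (EuclideanMotionAlgebra.invariantForm_apply_self_eq_sq_mul hinv hspan h1 h2 h3) u v ⟨huu, hvv⟩

/-- The Lie algebra `𝔢(2)` of orientation-preserving Euclidean
motions of the plane — spanned by `t, e₁, e₂` with `[t,e₁] = e₂`, `[t,e₂] = −e₁`,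
`[e₁,e₂] = 0` — admits no ad-invariant symmetric bilinear form of Lorentzian
signature `(1,2)`, i.e. no such form with an orthogonal spanning triple on which it
takes one negative and two positive values. -/
theorem euclidean_motions_algebra_has_no_invariant_lorentz_form
    {𝔤 : Type*} [LieRing 𝔤] [LieAlgebra ℝ 𝔤]
    (t e₁ e₂ : 𝔤)
    (hspan : Submodule.span ℝ {t, e₁, e₂} = ⊤)
    (hind : LinearIndependent ℝ ![t, e₁, e₂])
    (h1 : ⁅t, e₁⁆ = e₂) (h2 : ⁅t, e₂⁆ = -e₁) (h3 : ⁅e₁, e₂⁆ = 0) :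
    ¬ ∃ κ : 𝔤 →ₗ[ℝ] 𝔤 →ₗ[ℝ] ℝ,
        (∀ X Y : 𝔤, κ X Y = κ Y X) ∧
        (∀ X Y Z : 𝔤, κ ⁅Z, X⁆ Y + κ X ⁅Z, Y⁆ = 0) ∧
        (∃ u v w : 𝔤, Submodule.span ℝ {u, v, w} = ⊤ ∧
          κ u v = 0 ∧ κ u w = 0 ∧ κ v w = 0 ∧
          κ u u < 0 ∧ 0 < κ v v ∧ 0 < κ w w) :=
  euclidean_motions_algebra_has_no_invariant_lorentz_form_general t e₁ e₂ hspan h1 h2 h3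
end

section
/- Let 𝔤 be a Lie algebra with nilradical 𝔫 (the maximal nilpotent ideal), and let A be a semisimple automorphism of 𝔤 that restricts to the identity on 𝔫. Then A is the identity. -/
/-!
The displacement `A X - X` centralizes the nilradical `𝔫`, because `A` fixes both `n` and
`⁅X, n⁆ ∈ 𝔫`. In a solvable Lie algebra the centralizer of the nilradical lies in it: going up the
derived series of the centralizer, a term whose derived ideal lies in `𝔫` is two-step nilpotent,
hence also lies in `𝔫`. So `A X - X ∈ 𝔫` is fixed by `A`, i.e. `(A - 1)² = 0`, and a semisimple
unipotent map is the identity.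
-/

namespace Module.End

variable {R M : Type*} [CommRing R] [AddCommGroup M] [Module R M] {f : End R M}

lemma eq_one_of_isSemisimple_of_isNilpotent_sub_one (hs : f.IsSemisimple)
    (hn : IsNilpotent (f - 1)) : f = 1 := by
  have hs' : (f - algebraMap R (End R M) 1).IsSemisimple := isSemisimple_sub_algebraMap_iff.mpr hs
  rw [map_one] at hs'
  exact sub_eq_zero.mp (eq_zero_of_isNilpotent_isSemisimple hn hs')

end Module.End

namespace LieIdeal

open LieAlgebra LieModule

variable {R L : Type*} [CommRing R] [LieRing L] [LieAlgebra R L]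

lemma isNilpotent_of_lie_le_of_lie_eq_bot {I N : LieIdeal R L} (hII : ⁅I, I⁆ ≤ N)
    (hIN : ⁅I, N⁆ = ⊥) : LieRing.IsNilpotent I := by
  have hmem : ∀ m ∈ lowerCentralSeries R I I 1, (m : L) ∈ N := by
    intro m hm
    have hm' : m ∈ derivedSeries R I 1 := hm
    rw [derivedSeries_eq_derivedSeriesOfIdeal_comap, derivedSeriesOfIdeal_succ,
      derivedSeriesOfIdeal_zero] at hm'
    exact hII hm'
  have h2 : lowerCentralSeries R I I 2 = ⊥ := by
    rw [lowerCentralSeries_succ, LieSubmodule.lie_eq_bot_iff]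
    intro x _ m hm
    exact Subtype.ext ((LieSubmodule.lie_eq_bot_iff N I).mp hIN x x.2 m (hmem m hm))
  exact (isNilpotent_iff R I I).mpr ⟨2, h2⟩

variable [IsSolvable L] {N : LieIdeal R L}

lemma le_of_lie_eq_bot_of_forall_isNilpotent_le
    (hmax : ∀ J : LieIdeal R L, LieRing.IsNilpotent J → J ≤ N) {I : LieIdeal R L}
    (hIN : ⁅I, N⁆ = ⊥) : I ≤ N := by
  obtain ⟨k, hk⟩ := IsSolvable.solvable R L
  have hk_le : derivedSeriesOfIdeal R L k I ≤ N := by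
    rw [derivedSeries_def] at hk
    exact (derivedSeriesOfIdeal_mono le_top k).trans (hk ▸ bot_le)
  have hstep (j : ℕ) (hj : derivedSeriesOfIdeal R L (j + 1) I ≤ N) :
      derivedSeriesOfIdeal R L j I ≤ N := by
    refine hmax _ (isNilpotent_of_lie_le_of_lie_eq_bot (N := N) ?_ ?_)
    · rwa [← derivedSeriesOfIdeal_succ]
    · exact eq_bot_iff.mpr <|
        hIN ▸ LieSubmodule.mono_lie_left (N := N) (derivedSeriesOfIdeal_le_self I j)
  exact Nat.decreasingInduction (motive := fun j _ ↦ derivedSeriesOfIdeal R L j I ≤ N)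
    (fun j _ ↦ hstep j) hk_le k.zero_le

lemma ker_le_of_forall_isNilpotent_le
    (hmax : ∀ J : LieIdeal R L, LieRing.IsNilpotent J → J ≤ N) : LieModule.ker R L N ≤ N :=
  le_of_lie_eq_bot_of_forall_isNilpotent_le hmax <| (LieSubmodule.lie_eq_bot_iff _ _).mpr
    fun x hx n hn ↦ congrArg Subtype.val ((LieModule.mem_ker R L N x).mp hx ⟨n, hn⟩)

end LieIdeal

lemma LieHom.sub_self_mem_ker_of_forall_mem_eq {R L : Type*} [CommRing R] [LieRing L]
    [LieAlgebra R L] {N : LieIdeal R L} (f : L →ₗ⁅R⁆ L) (hf : ∀ n ∈ N, f n = n) (x : L) :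
    f x - x ∈ LieModule.ker R L N := by
  refine (LieModule.mem_ker R L N _).mpr fun n ↦ Subtype.ext ?_
  have hfx : ⁅f x, (n : L)⁆ = ⁅x, (n : L)⁆ := by
    rw [← hf n n.2, ← f.map_lie, hf _ (N.lie_mem n.2), hf n n.2]
  simp [sub_lie, hfx]

theorem semisimple_automorphism_fixing_nilradical_is_identity_general
    {𝔤 : Type*} [LieRing 𝔤] [LieAlgebra ℝ 𝔤]
    [LieAlgebra.IsSolvable 𝔤]
    (𝔫 : LieIdeal ℝ 𝔤)
    (hmax : ∀ I : LieIdeal ℝ 𝔤, LieRing.IsNilpotent I → I ≤ 𝔫)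
    (A : 𝔤 ≃ₗ⁅ℝ⁆ 𝔤)
    (hss : Module.End.IsSemisimple (A.toLinearEquiv.toLinearMap : Module.End ℝ 𝔤))
    (hfix : ∀ X ∈ 𝔫, A X = X) :
    ∀ X : 𝔤, A X = X := by
  have hdisp (X : 𝔤) : A X - X ∈ 𝔫 :=
    LieIdeal.ker_le_of_forall_isNilpotent_le hmax
      (A.toLieHom.sub_self_mem_ker_of_forall_mem_eq hfix X)
  have hunip : IsNilpotent (A.toLinearEquiv.toLinearMap - 1 : Module.End ℝ 𝔤) := by
    refine ⟨2, LinearMap.ext fun X ↦ ?_⟩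
    simp [sq, hfix _ (hdisp X)]
  exact LinearMap.congr_fun (Module.End.eq_one_of_isSemisimple_of_isNilpotent_sub_one hss hunip)

/-- Let `𝔤` be a (finite-dimensional real solvable) Lie algebra
with nilradical `𝔫` (the maximal nilpotent ideal), and let `A` be a semisimple
(diagonalizable) Lie algebra automorphism of `𝔤` restricting to the identity on
`𝔫`. Then `A` is the identity. -/
theorem semisimple_automorphism_fixing_nilradical_is_identity
    {𝔤 : Type*} [LieRing 𝔤] [LieAlgebra ℝ 𝔤] [Module.Finite ℝ 𝔤]
    [LieAlgebra.IsSolvable 𝔤]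
    (𝔫 : LieIdeal ℝ 𝔤)
    (hnil : LieRing.IsNilpotent 𝔫)
    (hmax : ∀ I : LieIdeal ℝ 𝔤, LieRing.IsNilpotent I → I ≤ 𝔫)
    (A : 𝔤 ≃ₗ⁅ℝ⁆ 𝔤)
    (hss : Module.End.IsSemisimple (A.toLinearEquiv.toLinearMap : Module.End ℝ 𝔤))
    (hfix : ∀ X ∈ 𝔫, A X = X) :
    ∀ X : 𝔤, A X = X :=
  semisimple_automorphism_fixing_nilradical_is_identity_general 𝔫 hmax A hss hfix
end

section
/- On the twisted Heisenberg algebra ℋℰ^t_d = ℝt ⊕ ℝZ ⊕ ℂ^d (with [t, X] = iX for X ∈ ℂ^d, [t, Z] = 0, [X, Y] = ω(X,Y)Z for X,Y ∈ ℂ^d), the symmetric bilinear form ⟨·,·⟩ defined by: the standard real inner product on ℂ^d, ℂ^d orthogonal to span(t, Z), ⟨t,t⟩ = ⟨Z,Z⟩ = 0, ⟨t,Z⟩ = 1, is a non-degenerate form of Lorentzian signature (1, 2d+1) that is ad-invariant: ⟨[u,v], w⟩ + ⟨v, [u,w]⟩ = 0 for all u, v, w. -/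
open scoped BigOperators

/-- The twisted Heisenberg algebra `ℋℰ^t_d = ℝt ⊕ ℝZ ⊕ ℂ^d` as a vector space:
an element `(a, b, v)` represents `a·t + b·Z + v`. -/
abbrev TwistedHeisenberg (d : ℕ) := ℝ × ℝ × (Fin d → ℂ)

/-- The standard symplectic form `ω(v,w) = ⟨v, iw⟩₀` on `ℂ^d` (the imaginary part of
the standard Hermitian product). -/
noncomputable def heisSymplectic {d : ℕ} (v w : Fin d → ℂ) : ℝ :=
  ∑ j, ((starRingEnd ℂ) (v j) * w j).im

/-- The Lie bracket of `ℋℰ^t_d`: `[t, X] = iX` for `X ∈ ℂ^d`, `[t, Z] = 0`, and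
`[X, Y] = ω(X,Y)·Z` for `X, Y ∈ ℂ^d`. -/
noncomputable def twistedHeisBracket {d : ℕ}
    (u u' : TwistedHeisenberg d) : TwistedHeisenberg d :=
  (0, heisSymplectic u.2.2 u'.2.2,
    fun j => u.1 • (Complex.I * u'.2.2 j) - u'.1 • (Complex.I * u.2.2 j))

/-- The bilinear form of the twisted Heisenberg algebra: the standard real inner
product on `ℂ^d`, with `ℂ^d ⊥ span(t, Z)`, `⟨t,t⟩ = ⟨Z,Z⟩ = 0` and `⟨t,Z⟩ = 1`. -/
noncomputable def twistedHeisForm {d : ℕ} (u u' : TwistedHeisenberg d) : ℝ :=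
  u.1 * u'.2.1 + u'.1 * u.2.1 + ∑ j, ((starRingEnd ℂ) (u.2.2 j) * u'.2.2 j).re

/-!
The form is the orthogonal sum of the hyperbolic plane `span(t, Z)`, in which `t - Z` and `t + Z`
have squares `-2` and `2`, and of the Euclidean structure of `ℂ^d ≅ ℝ^{2d}`. An orthogonal family
of non-isotropic vectors is linearly independent, so `t ∓ Z` together with the real basis
`e_k, i e_k` of `ℂ^d` span the algebra.
Ad-invariance is a pointwise identity on `ℂ`: `ω` is the imaginary part of the Hermitian product,
and multiplication by `i` is skew for its real part.
-/

open Complex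
open scoped InnerProductSpace

lemma sum_inner_single {ι E : Type*} [Fintype ι] [DecidableEq ι] [NormedAddCommGroup E]
    [InnerProductSpace ℝ E] (k l : ι) (x y : E) :
    ∑ j, ⟪(Pi.single k x : ι → E) j, (Pi.single l y : ι → E) j⟫_ℝ =
      if k = l then ⟪x, y⟫_ℝ else 0 := by
  rw [Finset.sum_eq_single k (fun j _ hj => by simp only [Pi.single_eq_of_ne hj, inner_zero_left])
    (by simp)]
  by_cases h : k = l
  · subst h; simp only [Pi.single_eq_same, if_true]
  · simp only [Pi.single_eq_of_ne h, inner_zero_right, if_neg h]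

namespace TwistedHeisenberg

variable {d : ℕ}

lemma twistedHeisForm_eq_inner (u v : TwistedHeisenberg d) :
    twistedHeisForm u v = u.1 * v.2.1 + v.1 * u.2.1 + ∑ j, ⟪u.2.2 j, v.2.2 j⟫_ℝ := by
  simp only [twistedHeisForm, Complex.inner, mul_comm (v.2.2 _)]

lemma twistedHeisForm_comm (u v : TwistedHeisenberg d) :
    twistedHeisForm u v = twistedHeisForm v u := by
  simp only [twistedHeisForm_eq_inner, real_inner_comm (u.2.2 _)]
  ring

lemma twistedHeisForm_bracket_add (u v w : TwistedHeisenberg d) :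
    twistedHeisForm (twistedHeisBracket u v) w + twistedHeisForm v (twistedHeisBracket u w) = 0 := by
  simp only [twistedHeisForm, twistedHeisBracket, heisSymplectic, Finset.mul_sum, zero_mul,
    add_zero, zero_add, ← Finset.sum_add_distrib]
  refine Finset.sum_eq_zero fun j _ => ?_
  simp only [mul_re, mul_im, conj_re, conj_im, sub_re, sub_im, real_smul, ofReal_re, ofReal_im,
    I_re, I_im]
  ring

lemma eq_zero_of_twistedHeisForm_eq_zero {u : TwistedHeisenberg d}
    (h : ∀ w, twistedHeisForm u w = 0) : u = 0 := by
  obtain ⟨a, b, v⟩ := u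
  have ha : a = 0 := by simpa [twistedHeisForm_eq_inner] using h (0, 1, 0)
  have hb : b = 0 := by simpa [twistedHeisForm_eq_inner] using h (1, 0, 0)
  have hv : ∑ j, ‖v j‖ ^ 2 = 0 := by simpa [twistedHeisForm_eq_inner] using h (0, 0, v)
  have hv' : v = 0 := funext fun j => by
    simpa using (Finset.sum_eq_zero_iff_of_nonneg fun j _ => sq_nonneg ‖v j‖).1 hv j
      (Finset.mem_univ j)
  simp [ha, hb, hv']

noncomputable def bilinForm (d : ℕ) : LinearMap.BilinForm ℝ (TwistedHeisenberg d) :=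
  LinearMap.mk₂ ℝ twistedHeisForm
    (fun u u' v => by
      simp only [twistedHeisForm_eq_inner, Prod.fst_add, Prod.snd_add, Pi.add_apply,
        inner_add_left, Finset.sum_add_distrib]
      ring)
    (fun c u v => by
      simp only [twistedHeisForm_eq_inner, Prod.smul_fst, Prod.smul_snd, Pi.smul_apply,
        real_inner_smul_left, smul_eq_mul, ← Finset.mul_sum]
      ring)
    (fun u v v' => by
      simp only [twistedHeisForm_eq_inner, Prod.fst_add, Prod.snd_add, Pi.add_apply,
        inner_add_right, Finset.sum_add_distrib]
      ring)
    (fun c u v => by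
      simp only [twistedHeisForm_eq_inner, Prod.smul_fst, Prod.smul_snd, Pi.smul_apply,
        real_inner_smul_right, smul_eq_mul, ← Finset.mul_sum]
      ring)

noncomputable def complexFrame (p : Fin 2 × Fin d) : TwistedHeisenberg d :=
  (0, 0, Pi.single p.2 (orthonormalBasisOneI p.1))

lemma twistedHeisForm_complexFrame (p q : Fin 2 × Fin d) :
    twistedHeisForm (complexFrame p) (complexFrame q) = if p = q then 1 else 0 := by
  simp only [complexFrame, twistedHeisForm_eq_inner, sum_inner_single,
    orthonormalBasisOneI.inner_eq_ite, Prod.ext_iff, mul_zero, add_zero, zero_add]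
  split_ifs <;> tauto

lemma twistedHeisForm_complexFrame_left (a b : ℝ) (p : Fin 2 × Fin d) :
    twistedHeisForm (complexFrame p) (a, b, 0) = 0 := by
  simp [complexFrame, twistedHeisForm_eq_inner]

lemma twistedHeisForm_complexFrame_right (a b : ℝ) (p : Fin 2 × Fin d) :
    twistedHeisForm (a, b, 0) (complexFrame p) = 0 := by
  simp [complexFrame, twistedHeisForm_eq_inner]

noncomputable def lorentzFrame (d : ℕ) : Fin (2 * d + 2) → TwistedHeisenberg d :=
  Fin.cons (1, -1, 0) <| Fin.cons (1, 1, 0) (complexFrame ∘ finProdFinEquiv.symm)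

lemma lorentzFrame_orthogonal (i j : Fin (2 * d + 2)) (hij : i ≠ j) :
    twistedHeisForm (lorentzFrame d i) (lorentzFrame d j) = 0 := by
  revert i j
  simp only [Fin.forall_fin_succ, lorentzFrame, Fin.cons_zero, Fin.cons_succ, Function.comp_apply,
    ne_eq, Fin.succ_inj, EmbeddingLike.apply_eq_iff_eq, twistedHeisForm_complexFrame,
    twistedHeisForm_complexFrame_left, twistedHeisForm_complexFrame_right]
  norm_num [twistedHeisForm]

lemma twistedHeisForm_lorentzFrame_zero :
    twistedHeisForm (lorentzFrame d 0) (lorentzFrame d 0) = -2 := by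
  norm_num [lorentzFrame, twistedHeisForm]

lemma twistedHeisForm_lorentzFrame_pos {i : Fin (2 * d + 2)} (hi : i ≠ 0) :
    0 < twistedHeisForm (lorentzFrame d i) (lorentzFrame d i) := by
  obtain ⟨j, rfl⟩ := Fin.exists_succ_eq.2 hi
  cases j using Fin.cases with
  | zero => norm_num [lorentzFrame, twistedHeisForm]
  | succ j => simp [lorentzFrame, twistedHeisForm_complexFrame]

lemma finrank_eq : Module.finrank ℝ (TwistedHeisenberg d) = 2 * d + 2 := by
  simp [Module.finrank_pi_fintype]
  ring

lemma span_lorentzFrame : Submodule.span ℝ (Set.range (lorentzFrame d)) = ⊤ := by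
  refine LinearIndependent.span_eq_top_of_card_eq_finrank' ?_
    (by rw [finrank_eq, Fintype.card_fin])
  refine LinearMap.BilinForm.linearIndependent_of_iIsOrtho (B := bilinForm d)
    lorentzFrame_orthogonal fun i => ?_
  rcases eq_or_ne i 0 with rfl | hi
  · simp [bilinForm, twistedHeisForm_lorentzFrame_zero]
  · exact (twistedHeisForm_lorentzFrame_pos hi).ne'

end TwistedHeisenberg

open TwistedHeisenberg

/-- On the twisted Heisenberg algebra `ℋℰ^t_d`, the above symmetric
bilinear form is non-degenerate, of Lorentzian signature `(1, 2d+1)` (an orthogonal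
spanning family with exactly one vector of negative square and `2d+1` of positive
square), and is ad-invariant: `⟨[u,v], w⟩ + ⟨v, [u,w]⟩ = 0` for all `u, v, w`. -/
theorem twistedHeisForm_lorentzian_and_ad_invariant (d : ℕ) :
    (∀ u v : TwistedHeisenberg d, twistedHeisForm u v = twistedHeisForm v u) ∧
    (∀ u v w : TwistedHeisenberg d,
      twistedHeisForm (twistedHeisBracket u v) w
        + twistedHeisForm v (twistedHeisBracket u w) = 0) ∧
    (∀ u : TwistedHeisenberg d,
      (∀ w : TwistedHeisenberg d, twistedHeisForm u w = 0) → u = 0) ∧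
    (∃ e : Fin (2 * d + 2) → TwistedHeisenberg d,
      Submodule.span ℝ (Set.range e) = ⊤ ∧
      (∀ i j, i ≠ j → twistedHeisForm (e i) (e j) = 0) ∧
      twistedHeisForm (e 0) (e 0) < 0 ∧
      ∀ i, i ≠ 0 → 0 < twistedHeisForm (e i) (e i)) :=
  ⟨twistedHeisForm_comm, twistedHeisForm_bracket_add,
    fun _ => eq_zero_of_twistedHeisForm_eq_zero,
    lorentzFrame d, span_lorentzFrame, lorentzFrame_orthogonal,
    by norm_num [twistedHeisForm_lorentzFrame_zero], fun _ => twistedHeisForm_lorentzFrame_pos⟩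
end

section
/- Let 𝔰 be the Lie algebra of a twisted Heisenberg group (semidirect product 𝔰 = ℝt ⋉ ℋℰ_d where ad_t acts on ℂ^d as a ℂ-linear diagonalizable map R = ad_t with eigenvalues iλ₁, ..., iλ_d, λ_j nonzero integers of the same sign, and ad_t(Z)=0). Then any two ad-invariant Lorentzian symmetric bilinear forms on 𝔰 are equivalent by a Lie algebra automorphism of 𝔰. -/
open scoped BigOperators

/-- The twisted Heisenberg algebra with twist `lam : Fin d → ℤ`: the underlying
vector space is `ℝt ⊕ ℝZ ⊕ ℂ^d`, an element `(a, b, v)` representing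
`a·t + b·Z + v`. -/
abbrev TwistedHeis (d : ℕ) := ℝ × ℝ × (Fin d → ℂ)

/-- The standard symplectic form on `ℂ^d`. -/
noncomputable def twSymp {d : ℕ} (v w : Fin d → ℂ) : ℝ :=
  ∑ j, ((starRingEnd ℂ) (v j) * w j).im

/-- The bracket of the twisted Heisenberg algebra with twist `lam`:
`ad_t` acts on `ℂ^d` as the diagonal `ℂ`-linear map with eigenvalues `i·lam j`,
`[t,Z] = 0`, and `[X,Y] = ω(X,Y)·Z` for `X, Y ∈ ℂ^d`. -/
noncomputable def twBracket {d : ℕ} (lam : Fin d → ℤ)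
    (u u' : TwistedHeis d) : TwistedHeis d :=
  (0, twSymp u.2.2 u'.2.2,
    fun j => u.1 • ((lam j : ℝ) • (Complex.I * u'.2.2 j))
      - u'.1 • ((lam j : ℝ) • (Complex.I * u.2.2 j)))

/-- A symmetric bilinear form on a `(2d+2)`-dimensional space is Lorentzian if it
admits an orthogonal spanning family with exactly one vector of negative square. -/
def IsLorentzianForm {d : ℕ} (κ : TwistedHeis d →ₗ[ℝ] TwistedHeis d →ₗ[ℝ] ℝ) : Prop :=
  ∃ e : Fin (2 * d + 2) → TwistedHeis d,
    Submodule.span ℝ (Set.range e) = ⊤ ∧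
    (∀ i j, i ≠ j → κ (e i) (e j) = 0) ∧
    κ (e 0) (e 0) < 0 ∧ ∀ i, i ≠ 0 → 0 < κ (e i) (e i)

/-!
For `d ≥ 1`, invariance pins down every ad-invariant symmetric form: writing
`u = a t + b Z + x`, `κ(u, u') = μ a a' + c (a b' + a' b + ω(R⁻¹ x, x'))` with `μ = κ(t,t)` and
`c = κ(t,Z)`. Indeed `ℂ^d = R(ℂ^d)` is orthogonal to `t` and to `Z`, and `Z = [x, i x]` (for a
unit vector `x`) is null since it is central. In Lorentzian signature a null vector orthogonal to
a timelike one vanishes; as `Z` is null and orthogonal to `ℂ^d`, this forces `c ≠ 0` and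
`c / λⱼ > 0`. So `c₁ / c₂ > 0`, and the automorphism `t ↦ t + δ Z`, `Z ↦ s² Z`, `x ↦ s x` with
`s² = c₁ / c₂` and `2 δ c₂ = μ₁ - μ₂` carries `κ₁` to `κ₂`. For `d = 0` the algebra is abelian
and any two Lorentzian forms are isometric.
-/

namespace LinearMap.IsOrthoᵢ

section CommRing

variable {ι R M : Type*} [Fintype ι] [CommRing R] [AddCommGroup M] [Module R M]
  {κ : LinearMap.BilinForm R M} {B : Module.Basis ι R M}

theorem apply_eq_sum_repr (hB : κ.IsOrthoᵢ B) (u v : M) :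
    κ u v = ∑ i, B.repr u i * B.repr v i * κ (B i) (B i) := by
  classical
  conv_lhs => rw [← B.sum_repr u, ← B.sum_repr v]
  simp only [map_sum, LinearMap.sum_apply, map_smul, LinearMap.smul_apply, smul_eq_mul]
  refine Finset.sum_congr rfl fun i _ => ?_
  rw [Finset.sum_eq_single i (fun j _ hji => by rw [hB hji, mul_zero])
    (fun h => absurd (Finset.mem_univ i) h)]
  ring

end CommRing

section Real

variable {ι M : Type*} [AddCommGroup M] [Module ℝ M]
  {κ : LinearMap.BilinForm ℝ M} {B : Module.Basis ι ℝ M}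

theorem exists_isometry {N : Type*} [AddCommGroup N] [Module ℝ N]
    {κ' : LinearMap.BilinForm ℝ N} {B' : Module.Basis ι ℝ N}
    (hB : κ.IsOrthoᵢ B) (hB' : κ'.IsOrthoᵢ B')
    (hsign : ∀ i, 0 < κ (B i) (B i) / κ' (B' i) (B' i)) :
    ∃ A : M ≃ₗ[ℝ] N, ∀ u v, κ' (A u) (A v) = κ u v := by
  let w : ι → ℝˣ := fun i => Units.mk0 _ (Real.sqrt_pos.mpr (hsign i)).ne'
  let A := B.equiv (B'.unitsSMul w) (Equiv.refl ι)
  suffices κ'.compl₁₂ A.toLinearMap A.toLinearMap = κ from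
    ⟨A, fun u v => LinearMap.congr_fun₂ this u v⟩
  refine LinearMap.BilinForm.ext_basis B fun i j => ?_
  simp only [A, LinearMap.compl₁₂_apply, LinearEquiv.coe_coe, Module.Basis.equiv_apply,
    Equiv.refl_apply, Module.Basis.unitsSMul_apply, Units.smul_def, map_smul,
    LinearMap.smul_apply, smul_eq_mul]
  rcases eq_or_ne i j with rfl | hij
  · have hq : κ' (B' i) (B' i) ≠ 0 := fun h => by simpa [h] using hsign i
    rw [← mul_assoc, Units.val_mk0, Real.mul_self_sqrt (hsign i).le, div_mul_cancel₀ _ hq]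
  · rw [hB hij, hB' hij, mul_zero, mul_zero]

variable [Fintype ι] {i₀ : ι}

theorem apply_self_nonneg_of_repr_eq_zero (hB : κ.IsOrthoᵢ B)
    (hpos : ∀ i, i ≠ i₀ → 0 < κ (B i) (B i)) {w : M} (hw : B.repr w i₀ = 0) :
    0 ≤ κ w w := by
  rw [hB.apply_eq_sum_repr]
  refine Finset.sum_nonneg fun i _ => ?_
  rcases eq_or_ne i i₀ with rfl | hi
  · simp [hw]
  · exact mul_nonneg (mul_self_nonneg _) (hpos i hi).le

theorem repr_ne_zero_of_isotropic (hB : κ.IsOrthoᵢ B)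
    (hpos : ∀ i, i ≠ i₀ → 0 < κ (B i) (B i)) {z : M} (hz : z ≠ 0) (hzz : κ z z = 0) :
    B.repr z i₀ ≠ 0 := by
  intro hz₀
  refine hz (B.repr.injective (Finsupp.ext fun i => ?_))
  rcases eq_or_ne i i₀ with rfl | hi
  · simpa using hz₀
  have hterms := (Finset.sum_eq_zero_iff_of_nonneg fun k _ => ?_).mp
    ((hB.apply_eq_sum_repr z z).symm.trans hzz) i (Finset.mem_univ i)
  · simpa [(hpos i hi).ne'] using hterms
  · rcases eq_or_ne k i₀ with rfl | hk
    · simp [hz₀]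
    · exact mul_nonneg (mul_self_nonneg _) (hpos k hk).le

theorem eq_zero_of_isotropic_of_orthogonal (hB : κ.IsOrthoᵢ B)
    (hpos : ∀ i, i ≠ i₀ → 0 < κ (B i) (B i)) {z x : M} (hzz : κ z z = 0) (hzx : κ z x = 0)
    (hxx : κ x x < 0) : z = 0 := by
  by_contra hz
  have hz₀ := hB.repr_ne_zero_of_isotropic hpos hz hzz
  -- `w` has no `B i₀`-component, so it is spacelike, yet its square is `z₀² κ x x < 0`
  set w := B.repr x i₀ • z - B.repr z i₀ • x
  have hxz : κ x z = 0 := by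
    rw [hB.apply_eq_sum_repr] at hzx ⊢
    simpa only [mul_comm (B.repr x _)] using hzx
  have hww : κ w w = B.repr z i₀ ^ 2 * κ x x := by
    simp only [w, map_sub, map_smul, LinearMap.sub_apply, LinearMap.smul_apply, smul_eq_mul,
      hzz, hzx, hxz]
    ring
  have hw : B.repr w i₀ = 0 := by simp [w, mul_comm]
  have hw_nonneg := hB.apply_self_nonneg_of_repr_eq_zero hpos hw
  have hw_neg : κ w w < 0 := hww ▸ mul_neg_of_pos_of_neg (sq_pos_of_ne_zero hz₀) hxx
  exact hw_neg.not_ge hw_nonneg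

end Real

end LinearMap.IsOrthoᵢ

namespace TwistedHeis

variable {d : ℕ}

def t : TwistedHeis d := (1, 0, 0)

def Z : TwistedHeis d := (0, 1, 0)

def ofVec (v : Fin d → ℂ) : TwistedHeis d := (0, 0, v)

/-- The action `R = ad_t` on `ℂ^d`. -/
noncomputable def adT (lam : Fin d → ℤ) (v : Fin d → ℂ) : Fin d → ℂ :=
  fun j => (lam j : ℝ) • (Complex.I * v j)

/-- The form `ω(R⁻¹ v, w)` on `ℂ^d`. -/
noncomputable def twMetric (lam : Fin d → ℤ) (v w : Fin d → ℂ) : ℝ :=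
  ∑ j, ((starRingEnd ℂ) (v j) * w j).re / lam j

theorem eq_smul_t_add_smul_Z_add_ofVec (u : TwistedHeis d) :
    u = u.1 • t + u.2.1 • Z + ofVec u.2.2 := by
  ext <;> simp [t, Z, ofVec]

theorem Z_ne_zero : (Z : TwistedHeis d) ≠ 0 := by
  simp [Z]

theorem finrank_eq : Module.finrank ℝ (TwistedHeis d) = 2 * d + 2 := by
  simp [Module.finrank_prod, Module.finrank_pi_fintype, Complex.finrank_real_complex]
  ring

section Bracket

variable (lam : Fin d → ℤ)

theorem twBracket_t_ofVec (v : Fin d → ℂ) : twBracket lam t (ofVec v) = ofVec (adT lam v) := by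
  ext <;> simp [twBracket, twSymp, t, ofVec, adT]

theorem twBracket_ofVec_t (v : Fin d → ℂ) : twBracket lam (ofVec v) t = -ofVec (adT lam v) := by
  ext <;> simp [twBracket, twSymp, t, ofVec, adT]

theorem twBracket_t_Z : twBracket lam t Z = 0 := by
  ext <;> simp [twBracket, twSymp, t, Z]

theorem twBracket_ofVec_Z (v : Fin d → ℂ) : twBracket lam (ofVec v) Z = 0 := by
  ext <;> simp [twBracket, twSymp, Z, ofVec]

theorem twBracket_ofVec_ofVec (v w : Fin d → ℂ) :
    twBracket lam (ofVec v) (ofVec w) = twSymp v w • Z := by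
  ext <;> simp [twBracket, Z, ofVec]

theorem twBracket_of_isEmpty [IsEmpty (Fin d)] (u v : TwistedHeis d) : twBracket lam u v = 0 :=
  Prod.ext rfl (Prod.ext (by simp [twBracket, twSymp]) (Subsingleton.elim _ _))

theorem adT_surjective (hlam : ∀ j, lam j ≠ 0) : Function.Surjective (adT lam) := by
  intro v
  refine ⟨fun j => -Complex.I * v j / lam j, funext fun j => ?_⟩
  have : (lam j : ℂ) ≠ 0 := by exact_mod_cast hlam j
  simp only [adT, Complex.real_smul]
  push_cast
  field_simp
  simp

theorem twSymp_eq_twMetric_adT (hlam : ∀ j, lam j ≠ 0) (v w : Fin d → ℂ) :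
    twSymp v w = twMetric lam (adT lam v) w := by
  refine Finset.sum_congr rfl fun j _ => ?_
  have : (lam j : ℝ) ≠ 0 := by exact_mod_cast hlam j
  simp [adT, Complex.mul_re, Complex.mul_im]
  field_simp
  ring

theorem twMetric_single_self (j : Fin d) :
    twMetric lam (Pi.single j 1) (Pi.single j 1) = (lam j : ℝ)⁻¹ := by
  rw [twMetric, Finset.sum_eq_single j (fun k _ hk => by simp [hk]) (by simp)]
  simp

theorem twMetric_smul (s : ℝ) (v w : Fin d → ℂ) :
    twMetric lam (s • v) (s • w) = s ^ 2 * twMetric lam v w := by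
  rw [twMetric, twMetric, Finset.mul_sum]
  refine Finset.sum_congr rfl fun j _ => ?_
  simp [Complex.mul_re]
  ring

end Bracket

theorem twSymp_smul (s : ℝ) (v w : Fin d → ℂ) :
    twSymp (s • v) (s • w) = s ^ 2 * twSymp v w := by
  rw [twSymp, twSymp, Finset.mul_sum]
  refine Finset.sum_congr rfl fun j _ => ?_
  simp [Complex.mul_im]
  ring

theorem _root_.IsLorentzianForm.exists_basis {κ : LinearMap.BilinForm ℝ (TwistedHeis d)}
    (h : IsLorentzianForm κ) :
    ∃ B : Module.Basis (Fin (2 * d + 2)) ℝ (TwistedHeis d),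
      κ.IsOrthoᵢ B ∧ κ (B 0) (B 0) < 0 ∧ ∀ i, i ≠ 0 → 0 < κ (B i) (B i) := by
  obtain ⟨e, hspan, horth, hneg, hpos⟩ := h
  have hcard : Fintype.card (Fin (2 * d + 2)) = Module.finrank ℝ (TwistedHeis d) := by
    rw [finrank_eq, Fintype.card_fin]
  refine ⟨basisOfTopLeSpanOfCardEqFinrank e hspan.ge hcard, ?_⟩
  rw [coe_basisOfTopLeSpanOfCardEqFinrank]
  exact ⟨horth, hneg, hpos⟩

theorem _root_.IsLorentzianForm.exists_isometry
    {κ₁ κ₂ : LinearMap.BilinForm ℝ (TwistedHeis d)}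
    (h₁ : IsLorentzianForm κ₁) (h₂ : IsLorentzianForm κ₂) :
    ∃ A : TwistedHeis d ≃ₗ[ℝ] TwistedHeis d, ∀ u v, κ₂ (A u) (A v) = κ₁ u v := by
  obtain ⟨B₁, hB₁, hneg₁, hpos₁⟩ := h₁.exists_basis
  obtain ⟨B₂, hB₂, hneg₂, hpos₂⟩ := h₂.exists_basis
  refine hB₁.exists_isometry hB₂ fun i => ?_
  rcases eq_or_ne i 0 with rfl | hi
  · exact div_pos_of_neg_of_neg hneg₁ hneg₂
  · exact div_pos (hpos₁ i hi) (hpos₂ i hi)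

section InvariantForm

variable (lam : Fin d → ℤ) {κ : LinearMap.BilinForm ℝ (TwistedHeis d)}
  (hsymm : ∀ u v, κ u v = κ v u)
  (hinv : ∀ u v w, κ (twBracket lam u v) w + κ v (twBracket lam u w) = 0)
  (hlam : ∀ j, lam j ≠ 0)

include hsymm hinv hlam in
theorem apply_t_ofVec (v : Fin d → ℂ) : κ t (ofVec v) = 0 := by
  obtain ⟨w, rfl⟩ := adT_surjective lam hlam v
  have h := hinv (ofVec w) t t
  rw [twBracket_ofVec_t, map_neg, map_neg, LinearMap.neg_apply, hsymm _ t] at h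
  linarith

include hinv hlam in
theorem apply_Z_ofVec (v : Fin d → ℂ) : κ Z (ofVec v) = 0 := by
  obtain ⟨w, rfl⟩ := adT_surjective lam hlam v
  simpa [twBracket_t_Z, twBracket_t_ofVec] using hinv t Z (ofVec w)

include hinv in
theorem apply_Z_Z [Nonempty (Fin d)] : κ Z Z = 0 := by
  obtain ⟨j⟩ := ‹Nonempty (Fin d)›
  have hω : twSymp (Pi.single j 1) (Pi.single j Complex.I) = 1 := by
    rw [twSymp, Finset.sum_eq_single j (fun k _ hk => by simp [hk]) (by simp)]
    simp
  simpa [twBracket_ofVec_ofVec, twBracket_ofVec_Z, hω] using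
    hinv (ofVec (Pi.single j 1)) (ofVec (Pi.single j Complex.I)) Z

include hsymm hinv hlam in
theorem apply_ofVec_ofVec (v w : Fin d → ℂ) :
    κ (ofVec v) (ofVec w) = κ t Z * twMetric lam v w := by
  obtain ⟨v, rfl⟩ := adT_surjective lam hlam v
  have h := hinv (ofVec v) (ofVec w) t
  rw [twBracket_ofVec_ofVec, twBracket_ofVec_t, twSymp_eq_twMetric_adT lam hlam, map_neg,
    map_smul, LinearMap.smul_apply, smul_eq_mul, hsymm Z t, hsymm (ofVec w)] at h
  linarith

include hsymm hinv hlam in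
theorem apply_eq_of_invariant [Nonempty (Fin d)] (u v : TwistedHeis d) :
    κ u v = κ t t * (u.1 * v.1)
      + κ t Z * (u.1 * v.2.1 + v.1 * u.2.1 + twMetric lam u.2.2 v.2.2) := by
  have hXt x : κ (ofVec x) t = 0 := (hsymm _ _).trans (apply_t_ofVec lam hsymm hinv hlam x)
  have hXZ x : κ (ofVec x) Z = 0 := (hsymm _ _).trans (apply_Z_ofVec lam hinv hlam x)
  rw [eq_smul_t_add_smul_Z_add_ofVec u, eq_smul_t_add_smul_Z_add_ofVec v]
  simp only [map_add, map_smul, LinearMap.add_apply, LinearMap.smul_apply, smul_eq_mul,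
    apply_t_ofVec lam hsymm hinv hlam, apply_Z_ofVec lam hinv hlam, apply_Z_Z lam hinv,
    apply_ofVec_ofVec lam hsymm hinv hlam, hsymm Z t, hXt, hXZ]
  simp [t, Z, ofVec]
  ring

include hsymm hinv hlam in
theorem div_pos_of_isLorentzianForm (hLor : IsLorentzianForm κ) (j : Fin d) :
    0 < κ t Z / lam j := by
  have : Nonempty (Fin d) := ⟨j⟩
  obtain ⟨B, hB, hneg, hpos⟩ := hLor.exists_basis
  have hZZ : κ Z Z = 0 := apply_Z_Z lam hinv
  have hc : κ t Z ≠ 0 := by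
    intro hc
    refine Z_ne_zero (hB.eq_zero_of_isotropic_of_orthogonal hpos hZZ ?_ hneg)
    rw [apply_eq_of_invariant lam hsymm hinv hlam, hc]
    simp [Z]
  set x : TwistedHeis d := ofVec (Pi.single j 1)
  have hxx : κ x x = κ t Z / lam j := by
    rw [apply_ofVec_ofVec lam hsymm hinv hlam, twMetric_single_self, div_eq_mul_inv]
  by_contra hle
  have hxx_neg : κ x x < 0 :=
    hxx ▸ (not_lt.mp hle).lt_of_ne (div_ne_zero hc (by exact_mod_cast hlam j))
  exact Z_ne_zero <| hB.eq_zero_of_isotropic_of_orthogonal hpos hZZ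
    (apply_Z_ofVec lam hinv hlam _) hxx_neg

end InvariantForm

noncomputable def homothetyShear (s δ : ℝ) (hs : s ≠ 0) :
    TwistedHeis d ≃ₗ[ℝ] TwistedHeis d where
  toFun u := (u.1, s ^ 2 * u.2.1 + δ * u.1, s • u.2.2)
  invFun u := (u.1, (u.2.1 - δ * u.1) / s ^ 2, s⁻¹ • u.2.2)
  map_add' u v := by
    ext <;> simp
    ring
  map_smul' c u := by
    ext <;> simp
    all_goals ring
  left_inv u := by
    ext <;> simp [hs]
  right_inv u := by
    ext <;> simp [hs]
    field_simp
    ring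

theorem homothetyShear_apply (s δ : ℝ) (hs : s ≠ 0) (u : TwistedHeis d) :
    homothetyShear s δ hs u = (u.1, s ^ 2 * u.2.1 + δ * u.1, s • u.2.2) :=
  rfl

theorem homothetyShear_twBracket (lam : Fin d → ℤ) (s δ : ℝ) (hs : s ≠ 0)
    (u v : TwistedHeis d) :
    homothetyShear s δ hs (twBracket lam u v)
      = twBracket lam (homothetyShear s δ hs u) (homothetyShear s δ hs v) := by
  ext
  · rfl
  · simp [homothetyShear_apply, twBracket, twSymp_smul]
  · simp [homothetyShear_apply, twBracket]
    ring

theorem homothetyShear_isometry [Nonempty (Fin d)] (lam : Fin d → ℤ)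
    (hlam : ∀ j, lam j ≠ 0) {κ₁ κ₂ : LinearMap.BilinForm ℝ (TwistedHeis d)}
    (hsymm₁ : ∀ u v, κ₁ u v = κ₁ v u) (hsymm₂ : ∀ u v, κ₂ u v = κ₂ v u)
    (hinv₁ : ∀ u v w, κ₁ (twBracket lam u v) w + κ₁ v (twBracket lam u w) = 0)
    (hinv₂ : ∀ u v w, κ₂ (twBracket lam u v) w + κ₂ v (twBracket lam u w) = 0)
    {s δ : ℝ} (hs : s ≠ 0) (hc : κ₁ t Z = s ^ 2 * κ₂ t Z)
    (hμ : κ₁ t t = κ₂ t t + 2 * δ * κ₂ t Z) (u v : TwistedHeis d) :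
    κ₂ (homothetyShear s δ hs u) (homothetyShear s δ hs v) = κ₁ u v := by
  rw [apply_eq_of_invariant lam hsymm₁ hinv₁ hlam, apply_eq_of_invariant lam hsymm₂ hinv₂ hlam,
    homothetyShear_apply, homothetyShear_apply, twMetric_smul, hc, hμ]
  ring

end TwistedHeis

open TwistedHeis

/-- On the Lie algebra of a twisted Heisenberg group (twist
`lam : Fin d → ℤ` with all `lam j` nonzero of the same sign), any two ad-invariant
Lorentzian symmetric bilinear forms are equivalent by a Lie algebra automorphism. -/
theorem invariant_lorentz_forms_on_twisted_heisenberg_equivalent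
    {d : ℕ} (lam : Fin d → ℤ)
    (hlam : (∀ j, 0 < lam j) ∨ (∀ j, lam j < 0))
    (κ₁ κ₂ : TwistedHeis d →ₗ[ℝ] TwistedHeis d →ₗ[ℝ] ℝ)
    (hsymm₁ : ∀ u v, κ₁ u v = κ₁ v u) (hsymm₂ : ∀ u v, κ₂ u v = κ₂ v u)
    (hinv₁ : ∀ u v w, κ₁ (twBracket lam u v) w + κ₁ v (twBracket lam u w) = 0)
    (hinv₂ : ∀ u v w, κ₂ (twBracket lam u v) w + κ₂ v (twBracket lam u w) = 0)
    (hLor₁ : IsLorentzianForm κ₁) (hLor₂ : IsLorentzianForm κ₂) :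
    ∃ A : TwistedHeis d ≃ₗ[ℝ] TwistedHeis d,
      (∀ u v, A (twBracket lam u v) = twBracket lam (A u) (A v)) ∧
      (∀ u v, κ₂ (A u) (A v) = κ₁ u v) := by
  rcases isEmpty_or_nonempty (Fin d) with hd | ⟨⟨j⟩⟩
  · obtain ⟨A, hA⟩ := hLor₁.exists_isometry hLor₂
    exact ⟨A, fun u v => by rw [twBracket_of_isEmpty, twBracket_of_isEmpty, map_zero], hA⟩
  have : Nonempty (Fin d) := ⟨j⟩
  have hlam₀ : ∀ j, lam j ≠ 0 := fun j => hlam.elim (fun h => (h j).ne') (fun h => (h j).ne)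
  have hc₁ := div_pos_of_isLorentzianForm lam hsymm₁ hinv₁ hlam₀ hLor₁ j
  have hc₂ := div_pos_of_isLorentzianForm lam hsymm₂ hinv₂ hlam₀ hLor₂ j
  have hlamj : (lam j : ℝ) ≠ 0 := by exact_mod_cast hlam₀ j
  have hc₂₀ : κ₂ t Z ≠ 0 := fun h => by simp [h] at hc₂
  have hratio : 0 < κ₁ t Z / κ₂ t Z := by
    simpa [div_div_div_cancel_right₀ hlamj] using div_pos hc₁ hc₂
  set s := √(κ₁ t Z / κ₂ t Z)
  have hs : s ≠ 0 := (Real.sqrt_pos.mpr hratio).ne'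
  refine ⟨homothetyShear s ((κ₁ t t - κ₂ t t) / (2 * κ₂ t Z)) hs,
    homothetyShear_twBracket lam _ _ hs,
    homothetyShear_isometry lam hlam₀ hsymm₁ hsymm₂ hinv₁ hinv₂ hs ?_ ?_⟩
  · rw [Real.sq_sqrt hratio.le, div_mul_cancel₀ _ hc₂₀]
  · field_simp
    ring
end
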